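/- Let C be an s×m matrix with non-negative rational entries and non-zero columns, let {I_n} be the filtration of Q(C), and let α̂(F) be its Waldschmidt constant. Then α_F(1) ≥ α̂(F), and if the polyhedron Q(C) has only integral vertices then α_F(1) = α̂(F). -/

import Mathlib

open MvPolynomial

noncomputable section

/-- Membership of a rational point in the covering polyhedron `Q(C) = {x : x ≥ 0, xC ≥ 1}`. -/
def memCP {s m : ℕ} (C : Matrix (Fin s) (Fin m) ℚ) (x : Fin s → ℚ) : Prop :=
  (∀ i, 0 ≤ x i) ∧ ∀ j, 1 ≤ ∑ i, x i * C i j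

/-- The covering polyhedron `Q(C) ⊆ ℝ^s` of the matrix `C`. -/
def CPset {s m : ℕ} (C : Matrix (Fin s) (Fin m) ℚ) : Set (Fin s → ℝ) :=
  {x | (∀ i, 0 ≤ x i) ∧ ∀ j, (1 : ℝ) ≤ ∑ i, x i * (C i j : ℝ)}

/-- The `n`-th ideal of the filtration associated to the covering polyhedron of `C`. -/
def filtIdeal (K : Type*) [Field K] {s m : ℕ} (C : Matrix (Fin s) (Fin m) ℚ) (n : ℕ) :
    Ideal (MvPolynomial (Fin s) K) :=
  if n = 0 then ⊤ else
    Ideal.span { f | ∃ a : Fin s →₀ ℕ,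
      f = monomial a 1 ∧ memCP C (fun i => (a i : ℚ) / n) }

/-- `α_F(n)`: the least degree of a monomial in `I_n`. -/
def alphaF (K : Type*) [Field K] {s m : ℕ} (C : Matrix (Fin s) (Fin m) ℚ) (n : ℕ) : ℕ :=
  sInf { d | ∃ a : Fin s →₀ ℕ,
    (monomial a 1 : MvPolynomial (Fin s) K) ∈ filtIdeal K C n ∧ d = ∑ i, a i }

/-- The Waldschmidt constant `α̂(F) = lim α_F(n)/n = inf α_F(n)/n`. -/
def waldschmidt (K : Type*) [Field K] {s m : ℕ} (C : Matrix (Fin s) (Fin m) ℚ) : ℝ :=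
  ⨅ n : ℕ+, (alphaF K C (n : ℕ) : ℝ) / (n : ℕ)

/-! `α̂(F) ≤ α_F(1)` is the `n = 1` term of the infimum. Conversely, a monomial `t^a ∈ I_n` is
divisible by some `t^b` with `b / n ∈ Q(C)`, so `α_F(n) ≥ n · min_{Q(C)} deg`. Since
`Q(C) ⊆ ℝ≥0^s` is closed, `deg` has compact sublevel sets on it; hence its minimum is attained
on a nonempty compact exposed face, whose extreme points (Krein–Milman) are vertices of `Q(C)`.
An integral minimising vertex `b` gives `t^b ∈ I_1`, so `α_F(1) ≤ min_{Q(C)} deg ≤ α_F(n) / n`.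
If `Q(C)` is empty, every `α_F(n)` with `n ≥ 1` is the junk value `sInf ∅ = 0`. -/

section ExtremeMinimizer

variable {E : Type*} [AddCommGroup E] [Module ℝ E] [TopologicalSpace E] [T2Space E]
  [IsTopologicalAddGroup E] [ContinuousSMul ℝ E] [LocallyConvexSpace ℝ E]

theorem exists_mem_extremePoints_isMinOn {A : Set E} (hA : IsClosed A) (l : StrongDual ℝ E)
    {x : E} (hx : x ∈ A) (hK : IsCompact {y ∈ A | l y ≤ l x}) :
    ∃ v ∈ A.extremePoints ℝ, IsMinOn l A v := by
  obtain ⟨p, ⟨hpA, -⟩, hp⟩ := hK.exists_isMinOn ⟨x, hx, le_rfl⟩ l.continuous.continuousOn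
  have hpmin : IsMinOn l A p := fun y hy => by
    by_cases hyx : l y ≤ l x
    · exact hp ⟨hy, hyx⟩
    · exact (hp ⟨hx, le_rfl⟩).trans (le_of_not_ge hyx)
  -- `(-l).toExposed A` is the face of minimisers of `l` on `A`.
  have hF : IsExposed ℝ A ((-l).toExposed A) := ContinuousLinearMap.toExposed.isExposed
  have hFK : (-l).toExposed A ⊆ {y ∈ A | l y ≤ l x} := fun y ⟨hyA, hy⟩ =>
    ⟨hyA, by simpa using hy x hx⟩
  obtain ⟨v, hv⟩ := (hK.of_isClosed_subset (hF.isClosed hA) hFK).extremePoints_nonempty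
    ⟨p, hpA, fun y hy => by simpa using hpmin hy⟩
  exact ⟨v, hF.isExtreme.extremePoints_subset_extremePoints hv,
    fun y hy => by simpa using hv.1.2 y hy⟩

end ExtremeMinimizer

theorem isCompact_setOf_sum_le {ι : Type*} [Fintype ι] {A : Set (ι → ℝ)} (hA : IsClosed A)
    (hA0 : ∀ x ∈ A, ∀ i, 0 ≤ x i) (c : ℝ) : IsCompact {x ∈ A | ∑ i, x i ≤ c} := by
  refine (isCompact_univ_pi fun _ => isCompact_Icc (a := 0) (b := c)).of_isClosed_subset
    (hA.inter (isClosed_le (continuous_finsetSum _ fun i _ => continuous_apply i)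
      continuous_const)) ?_
  rintro x ⟨hxA, hxc⟩ i -
  exact ⟨hA0 x hxA i,
    (Finset.single_le_sum (fun k _ => hA0 x hxA k) (Finset.mem_univ i)).trans hxc⟩

theorem exists_mem_extremePoints_isMinOn_sum {ι : Type*} [Fintype ι] {A : Set (ι → ℝ)}
    (hA : IsClosed A) (hA0 : ∀ x ∈ A, ∀ i, 0 ≤ x i) (hne : A.Nonempty) :
    ∃ v ∈ A.extremePoints ℝ, IsMinOn (fun x => ∑ i, x i) A v := by
  obtain ⟨x, hx⟩ := hne
  set l : StrongDual ℝ (ι → ℝ) := ∑ i, ContinuousLinearMap.proj i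
  have hl : ⇑l = fun y => ∑ i, y i := funext fun y => by simp [l]
  obtain ⟨v, hv, hmin⟩ := exists_mem_extremePoints_isMinOn hA l hx
    (by rw [hl]; exact isCompact_setOf_sum_le hA hA0 (∑ i, x i))
  exact ⟨v, hv, hl ▸ hmin⟩

section Filtration

variable {K : Type*} [Field K] {s m : ℕ} {C : Matrix (Fin s) (Fin m) ℚ}

theorem isClosed_CPset (C : Matrix (Fin s) (Fin m) ℚ) : IsClosed (CPset C) := by
  simp only [CPset, Set.ofPred_and, Set.ofPred_forall]
  exact (isClosed_iInter fun i => isClosed_le continuous_const (continuous_apply i)).inter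
    (isClosed_iInter fun j => isClosed_le continuous_const
      (continuous_finsetSum _ fun i _ => (continuous_apply i).mul continuous_const))

theorem memCP_iff_mem_CPset {x : Fin s → ℚ} :
    memCP C x ↔ (fun i => (x i : ℝ)) ∈ CPset C := by
  simp only [memCP, CPset, Set.mem_ofPred_eq]
  norm_cast

theorem monomial_mem_filtIdeal_iff {n : ℕ} (hn : n ≠ 0) {a : Fin s →₀ ℕ} :
    (monomial a 1 : MvPolynomial (Fin s) K) ∈ filtIdeal K C n ↔
      ∃ b ≤ a, memCP C (fun i => (b i : ℚ) / n) := by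
  classical
  have hset : {f | ∃ a : Fin s →₀ ℕ, f = monomial a (1 : K) ∧ memCP C (fun i => (a i : ℚ) / n)}
      = (fun a => monomial a (1 : K)) '' {a | memCP C (fun i => (a i : ℚ) / n)} := by
    ext f
    simp only [Set.mem_ofPred_eq, Set.mem_image]
    exact exists_congr fun a => by rw [eq_comm, and_comm]
  rw [filtIdeal, if_neg hn, hset, mem_ideal_span_monomial_image, support_monomial,
    if_neg one_ne_zero]
  simp only [Finset.mem_singleton, forall_eq, Set.mem_ofPred_eq]
  exact exists_congr fun b => and_comm

theorem alphaF_eq_zero_of_CPset_eq_empty (hQ : CPset C = ∅) {n : ℕ} (hn : n ≠ 0) :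
    alphaF K C n = 0 := by
  refine Nat.sInf_eq_zero.2 (Or.inr (Set.eq_empty_of_forall_notMem ?_))
  rintro d ⟨a, ha, -⟩
  obtain ⟨b, -, hb⟩ := (monomial_mem_filtIdeal_iff hn).1 ha
  exact (Set.eq_empty_iff_forall_notMem.1 hQ) _ (memCP_iff_mem_CPset.1 hb)

theorem alphaF_le_sum {n : ℕ} (hn : n ≠ 0) {b : Fin s →₀ ℕ}
    (hb : memCP C (fun i => (b i : ℚ) / n)) : alphaF K C n ≤ ∑ i, b i :=
  Nat.sInf_le ⟨b, (monomial_mem_filtIdeal_iff hn).2 ⟨b, le_rfl, hb⟩, rfl⟩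

theorem mul_le_alphaF {δ : ℝ} (hδ : ∀ y ∈ CPset C, δ ≤ ∑ i, y i) {n : ℕ} (hn : n ≠ 0)
    {b : Fin s →₀ ℕ} (hb : memCP C (fun i => (b i : ℚ) / n)) : n * δ ≤ alphaF K C n := by
  obtain ⟨a, ha, hα⟩ := Nat.sInf_mem (s := {d | ∃ a : Fin s →₀ ℕ,
      (monomial a 1 : MvPolynomial (Fin s) K) ∈ filtIdeal K C n ∧ d = ∑ i, a i})
    ⟨_, b, (monomial_mem_filtIdeal_iff hn).2 ⟨b, le_rfl, hb⟩, rfl⟩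
  obtain ⟨c, hca, hc⟩ := (monomial_mem_filtIdeal_iff hn).1 ha
  have hcδ := hδ _ (memCP_iff_mem_CPset.1 hc)
  push_cast at hcδ
  have hn' : (0 : ℝ) < n := by positivity
  calc (n : ℝ) * δ ≤ n * ∑ i, (c i : ℝ) / n := by gcongr
    _ = ∑ i, (c i : ℝ) := by rw [← Finset.sum_div]; field_simp
    _ ≤ alphaF K C n := by
      rw [alphaF, hα]; push_cast
      exact Finset.sum_le_sum fun i _ => by exact_mod_cast hca i

theorem memCP_nsmul_div {b : Fin s → ℕ} (hb : (fun i => (b i : ℝ)) ∈ CPset C) {n : ℕ}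
    (hn : n ≠ 0) :
    memCP C (fun i => ((Finsupp.equivFunOnFinite.symm (n • b) i : ℕ) : ℚ) / n) := by
  rw [memCP_iff_mem_CPset]
  convert hb using 2 with i
  simp [hn]

theorem alphaF_one_mul_le_alphaF {b : Fin s → ℕ} (hb : (fun i => (b i : ℝ)) ∈ CPset C)
    (hmin : IsMinOn (fun x => ∑ i, x i) (CPset C) (fun i => (b i : ℝ))) {n : ℕ} (hn : n ≠ 0) :
    (alphaF K C 1 : ℝ) * n ≤ alphaF K C n :=
  calc (alphaF K C 1 : ℝ) * n ≤ (∑ i, b i : ℕ) * n := by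
        gcongr
        simpa using alphaF_le_sum (K := K) one_ne_zero (memCP_nsmul_div hb one_ne_zero)
    _ = n * ∑ i, (b i : ℝ) := by push_cast; ring
    _ ≤ alphaF K C n := mul_le_alphaF hmin hn (memCP_nsmul_div hb hn)

end Filtration

theorem stmt6_general {K : Type*} [Field K] {s m : ℕ} (C : Matrix (Fin s) (Fin m) ℚ) :
    waldschmidt K C ≤ (alphaF K C 1 : ℝ) ∧
      ((∀ v ∈ Set.extremePoints ℝ (CPset C), ∃ z : Fin s → ℤ, v = fun i => (z i : ℝ)) →
        (alphaF K C 1 : ℝ) = waldschmidt K C) := by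
  have hbdd : BddBelow (Set.range fun n : ℕ+ => (alphaF K C n : ℝ) / (n : ℕ)) :=
    ⟨0, by rintro _ ⟨n, rfl⟩; positivity⟩
  have hle : waldschmidt K C ≤ alphaF K C 1 := by
    simpa [waldschmidt] using ciInf_le hbdd 1
  refine ⟨hle, fun hint => le_antisymm (le_ciInf fun n => ?_) hle⟩
  rw [le_div_iff₀ (by positivity)]
  rcases (CPset C).eq_empty_or_nonempty with hQ | hQ
  · simp [alphaF_eq_zero_of_CPset_eq_empty hQ one_ne_zero]
  obtain ⟨v, hv, hmin⟩ :=
    exists_mem_extremePoints_isMinOn_sum (isClosed_CPset C) (fun x hx => hx.1) hQ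
  obtain ⟨z, rfl⟩ := hint v hv
  lift z to Fin s → ℕ using fun i => Int.cast_nonneg_iff.1 (hv.1.1 i)
  simp only [Int.cast_natCast] at hv hmin
  exact alphaF_one_mul_le_alphaF hv.1 hmin n.ne_zero

/-- `α_F(1) ≥ α̂(F)`, with equality if the covering polyhedron `Q(C)` is integral
(all its vertices are integral). -/
theorem stmt6 {K : Type*} [Field K] {s m : ℕ} (C : Matrix (Fin s) (Fin m) ℚ)
    (hC : ∀ i j, 0 ≤ C i j) (hcol : ∀ j, ∃ i, C i j ≠ 0) :
    waldschmidt K C ≤ (alphaF K C 1 : ℝ) ∧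
      ((∀ v ∈ Set.extremePoints ℝ (CPset C), ∃ z : Fin s → ℤ, v = fun i => (z i : ℝ)) →
        (alphaF K C 1 : ℝ) = waldschmidt K C) :=
  stmt6_general C
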